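/- Let f : ℝ^d → ℂ be continuous with |f(x)| ≤ C exp(r₁|x|^{1/s}) for some C, r₁, s > 0, and let ψ : ℝ^d → ℂ be continuous with |ψ(y)| ≤ C' exp(−2r₀|y|^{1/s}) for some r₀ > r₁ when 1/s ≤ 1 (or r₀ > 0 arbitrary and |f(x)| growing subexponentially appropriately). Then for each x, the Riemann sums Σ_{k ∈ ℤ^d} f(x − εk) ψ(εk) ε^d converge, as ε → 0⁺, to ∫_{ℝ^d} f(x − y) ψ(y) dy. -/

import Mathlib

open Finset Real Filter MeasureTheory

/-- The Euclidean norm of a vector in `ℝ^d` realized as `Fin d → ℝ`. -/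
noncomputable def enorm' {d : ℕ} (x : Fin d → ℝ) : ℝ :=
  Real.sqrt (∑ i, (x i) ^ 2)

/-! For `ε > 0` the Riemann sum of `F z = f (x - z) * ψ z` is the integral of the step function
`y ↦ F (ε ⌊y / ε⌋)`, because `y ↦ ⌊y / ε⌋` is constant on the cells of the grid `εℤ^d`, each of
volume `ε ^ d`. The step functions tend to `F` pointwise as `ε → 0⁺` by continuity, and for
`ε ≤ 1` they are dominated by a multiple of `exp (-(2 r₀ - r₁) |y| ^ (1 / s))`: since `1 / s ≤ 1`,
`t ↦ t ^ (1 / s)` is subadditive, so `|x - z| ^ (1 / s) ≤ |x| ^ (1 / s) + |z| ^ (1 / s)` and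
`|y| ^ (1 / s) ≤ |ε ⌊y / ε⌋| ^ (1 / s) + (√d) ^ (1 / s)`. Dominated convergence concludes. -/

open Topology

lemma integrable_exp_neg_mul_norm_rpow {E : Type*} [NormedAddCommGroup E] [NormedSpace ℝ E]
    [FiniteDimensional ℝ E] [MeasurableSpace E] [BorelSpace E] (μ : Measure E)
    [μ.IsAddHaarMeasure] {b p : ℝ} (hb : 0 < b) (hp : 0 < p) :
    Integrable (fun x => exp (-b * ‖x‖ ^ p)) μ := by
  rcases subsingleton_or_nontrivial E with hE | hE
  · exact Integrable.of_finite
  · rw [integrable_fun_norm_addHaar μ (f := fun t => exp (-b * t ^ p))]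
    have hs : (-1 : ℝ) < (Module.finrank ℝ E - 1 : ℕ) := by
      linarith [(Module.finrank ℝ E - 1).cast_nonneg (α := ℝ)]
    refine (integrableOn_rpow_mul_exp_neg_mul_rpow hs hp hb).congr_fun (fun t _ => ?_)
      measurableSet_Ioi
    simp only [Real.rpow_natCast, smul_eq_mul]

section EuclideanNorm

variable {d : ℕ}

lemma enorm'_eq_norm (x : Fin d → ℝ) : enorm' x = ‖WithLp.toLp 2 x‖ := by
  simp [EuclideanSpace.norm_eq, enorm']

lemma enorm'_nonneg (x : Fin d → ℝ) : 0 ≤ enorm' x := Real.sqrt_nonneg _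

lemma enorm'_neg (x : Fin d → ℝ) : enorm' (-x) = enorm' x := by
  simp only [enorm'_eq_norm, WithLp.toLp_neg, norm_neg]

lemma enorm'_add_le (x y : Fin d → ℝ) : enorm' (x + y) ≤ enorm' x + enorm' y := by
  simp only [enorm'_eq_norm, WithLp.toLp_add]
  exact norm_add_le _ _

lemma enorm'_add_rpow_le {p : ℝ} (hp0 : 0 ≤ p) (hp1 : p ≤ 1) (x y : Fin d → ℝ) :
    enorm' (x + y) ^ p ≤ enorm' x ^ p + enorm' y ^ p :=
  (rpow_le_rpow (enorm'_nonneg _) (enorm'_add_le x y) hp0).trans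
    (rpow_add_le_add_rpow (enorm'_nonneg _) (enorm'_nonneg _) hp0 hp1)

lemma enorm'_le_sqrt_of_abs_le_one {x : Fin d → ℝ} (hx : ∀ i, |x i| ≤ 1) : enorm' x ≤ √d := by
  refine Real.sqrt_le_sqrt ?_
  calc ∑ i, x i ^ 2 ≤ ∑ _i : Fin d, (1 : ℝ) :=
        Finset.sum_le_sum fun i _ => (sq_le_one_iff_abs_le_one _).mpr (hx i)
    _ = d := by simp

lemma integrable_exp_neg_mul_enorm'_rpow {b p : ℝ} (hb : 0 < b) (hp : 0 < p) :
    Integrable (fun y : Fin d → ℝ => exp (-b * enorm' y ^ p)) := by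
  simp only [enorm'_eq_norm]
  exact (PiLp.volume_preserving_toLp (Fin d)).integrable_comp_emb
    (MeasurableEquiv.toLp 2 _).measurableEmbedding |>.mpr
    (integrable_exp_neg_mul_norm_rpow volume hb hp)

end EuclideanNorm

section Lattice

variable {d : ℕ}

noncomputable def latticeIndex (ε : ℝ) (y : Fin d → ℝ) : Fin d → ℤ := fun i => ⌊y i / ε⌋

noncomputable def latticeFloor (ε : ℝ) (y : Fin d → ℝ) : Fin d → ℝ :=
  fun i => ε * latticeIndex ε y i

lemma sub_latticeFloor_mem_Ico {ε : ℝ} (hε : 0 < ε) (y : Fin d → ℝ) (i : Fin d) :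
    y i - latticeFloor ε y i ∈ Set.Ico 0 ε := by
  have h : y i - latticeFloor ε y i = ε * Int.fract (y i / ε) := by
    rw [← Int.self_sub_floor, mul_sub, mul_div_cancel₀ _ hε.ne']
    rfl
  rw [h]
  exact ⟨mul_nonneg hε.le (Int.fract_nonneg _),
    mul_lt_of_lt_one_right hε (Int.fract_lt_one _)⟩

lemma tendsto_latticeFloor (y : Fin d → ℝ) :
    Tendsto (fun ε => latticeFloor ε y) (𝓝[>] 0) (𝓝 y) := by
  rw [tendsto_pi_nhds]
  intro i
  rw [tendsto_iff_norm_sub_tendsto_zero]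
  refine squeeze_zero_norm' ?_ (tendsto_id.mono_left nhdsWithin_le_nhds)
  filter_upwards [self_mem_nhdsWithin] with ε hε
  obtain ⟨h0, h1⟩ := sub_latticeFloor_mem_Ico hε y i
  rw [norm_norm, norm_sub_rev, Real.norm_of_nonneg h0]
  exact h1.le

lemma measurable_latticeIndex (ε : ℝ) : Measurable (latticeIndex (d := d) ε) := by
  unfold latticeIndex
  fun_prop

lemma measurable_latticeFloor (ε : ℝ) : Measurable (latticeFloor (d := d) ε) := by
  unfold latticeFloor latticeIndex
  fun_prop

lemma volume_latticeIndex_preimage {ε : ℝ} (hε : 0 < ε) (k : Fin d → ℤ) :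
    volume (latticeIndex ε ⁻¹' {k}) = ENNReal.ofReal ε ^ d := by
  have h : latticeIndex ε ⁻¹' {k} =
      Set.univ.pi fun i => (· * ε⁻¹) ⁻¹' (Int.floor ⁻¹' {k i}) := by
    ext y
    simp [latticeIndex, funext_iff, div_eq_mul_inv, Int.floor_eq_iff]
  rw [h, volume_pi_pi]
  simp [Real.volume_preimage_mul_right (inv_ne_zero hε.ne'), Int.preimage_floor_singleton,
    abs_of_pos hε]

end Lattice

section RiemannSum

variable {d : ℕ} {E : Type*} [NormedAddCommGroup E]

lemma norm_comp_latticeFloor_le {F : (Fin d → ℝ) → E} {K r p ε : ℝ} (hr : 0 ≤ r)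
    (hp0 : 0 ≤ p) (hp1 : p ≤ 1) (hF : ∀ z, ‖F z‖ ≤ K * exp (-r * enorm' z ^ p))
    (hε : ε ∈ Set.Ioc 0 1) (y : Fin d → ℝ) :
    ‖F (latticeFloor ε y)‖ ≤ K * exp (r * √d ^ p) * exp (-r * enorm' y ^ p) := by
  have hK : 0 ≤ K := nonneg_of_mul_nonneg_left ((norm_nonneg _).trans (hF y)) (exp_pos _)
  have hdist : enorm' (y - latticeFloor ε y) ≤ √d := by
    refine enorm'_le_sqrt_of_abs_le_one fun i => ?_
    obtain ⟨h0, h1⟩ := sub_latticeFloor_mem_Ico hε.1 y i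
    rw [Pi.sub_apply, abs_le]
    constructor <;> linarith [hε.2]
  have hy : enorm' y ^ p ≤ enorm' (latticeFloor ε y) ^ p + √d ^ p :=
    calc enorm' y ^ p = enorm' (latticeFloor ε y + (y - latticeFloor ε y)) ^ p := by
          rw [add_sub_cancel]
      _ ≤ enorm' (latticeFloor ε y) ^ p + enorm' (y - latticeFloor ε y) ^ p :=
          enorm'_add_rpow_le hp0 hp1 _ _
      _ ≤ enorm' (latticeFloor ε y) ^ p + √d ^ p := by
          gcongr
          exact enorm'_nonneg _
  calc ‖F (latticeFloor ε y)‖ ≤ K * exp (-r * enorm' (latticeFloor ε y) ^ p) := hF _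
    _ ≤ K * exp (r * √d ^ p + -r * enorm' y ^ p) := by
        gcongr
        nlinarith
    _ = K * exp (r * √d ^ p) * exp (-r * enorm' y ^ p) := by rw [exp_add, mul_assoc]

variable [NormedSpace ℝ E] [CompleteSpace E]

lemma hasSum_riemannSum {F : (Fin d → ℝ) → E} {ε : ℝ} (hε : 0 < ε)
    (hF : Integrable (fun y => F (latticeFloor ε y))) :
    HasSum (fun k : Fin d → ℤ => ε ^ d • F (fun i => ε * k i)) (∫ y, F (latticeFloor ε y)) := by
  have hcover : (⋃ k, latticeIndex ε ⁻¹' {k}) = (Set.univ : Set (Fin d → ℝ)) :=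
    Set.iUnion_eq_univ_iff.mpr fun y => ⟨latticeIndex ε y, rfl⟩
  have hsum := hasSum_integral_iUnion (f := fun y => F (latticeFloor ε y))
    (fun k => measurable_latticeIndex ε (measurableSet_singleton k))
    (pairwise_disjoint_fiber _) (by rwa [hcover, integrableOn_univ])
  rw [hcover, setIntegral_univ] at hsum
  have hpiece : ∀ k, ∫ y in latticeIndex ε ⁻¹' {k}, F (latticeFloor ε y) =
      ε ^ d • F (fun i => ε * k i) := fun k => by
    rw [setIntegral_congr_fun (g := fun _ => F (fun i => ε * k i))
      (measurable_latticeIndex ε (measurableSet_singleton k))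
      (fun y (hy : latticeIndex ε y = k) => by subst hy; rfl), setIntegral_const,
      measureReal_def, volume_latticeIndex_preimage hε, ENNReal.toReal_pow,
      ENNReal.toReal_ofReal hε.le]
  simpa only [hpiece] using hsum

theorem tendsto_riemannSum_of_dominated {F : (Fin d → ℝ) → E} (hF : Continuous F)
    {g : (Fin d → ℝ) → ℝ} (hg : Integrable g)
    (hbound : ∀ᶠ ε in 𝓝[>] 0, ∀ y, ‖F (latticeFloor ε y)‖ ≤ g y) :
    Tendsto (fun ε => ∑' k : Fin d → ℤ, ε ^ d • F (fun i => ε * k i)) (𝓝[>] 0)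
      (𝓝 (∫ y, F y)) := by
  have hmeas : ∀ ε, AEStronglyMeasurable (fun y => F (latticeFloor ε y)) :=
    fun ε => hF.comp_aestronglyMeasurable (measurable_latticeFloor ε).aestronglyMeasurable
  have hdct : Tendsto (fun ε => ∫ y, F (latticeFloor ε y)) (𝓝[>] 0) (𝓝 (∫ y, F y)) :=
    tendsto_integral_filter_of_dominated_convergence g (.of_forall hmeas)
      (hbound.mono fun _ h => .of_forall h) hg
      (.of_forall fun y => (hF.tendsto y).comp (tendsto_latticeFloor y))
  refine hdct.congr' ?_
  filter_upwards [hbound, self_mem_nhdsWithin] with ε hε hε0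
  exact ((hasSum_riemannSum hε0 (hg.mono' (hmeas ε) (.of_forall hε))).tsum_eq).symm

end RiemannSum

lemma norm_mul_le_of_growth_of_decay {d : ℕ} {R : Type*} [NormedRing R]
    {f ψ : (Fin d → ℝ) → R} {C C' r₁ r p : ℝ} (hp0 : 0 ≤ p) (hp1 : p ≤ 1) (hr₁ : 0 ≤ r₁)
    (hfb : ∀ x, ‖f x‖ ≤ C * exp (r₁ * enorm' x ^ p))
    (hψb : ∀ y, ‖ψ y‖ ≤ C' * exp (-r * enorm' y ^ p)) (x z : Fin d → ℝ) :
    ‖f (x - z) * ψ z‖ ≤ C * C' * exp (r₁ * enorm' x ^ p) * exp (-(r - r₁) * enorm' z ^ p) := by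
  have hC : 0 ≤ C := nonneg_of_mul_nonneg_left ((norm_nonneg _).trans (hfb x)) (exp_pos _)
  have hsub : enorm' (x - z) ^ p ≤ enorm' x ^ p + enorm' z ^ p := by
    simpa only [sub_eq_add_neg, enorm'_neg] using enorm'_add_rpow_le hp0 hp1 x (-z)
  calc ‖f (x - z) * ψ z‖ ≤ ‖f (x - z)‖ * ‖ψ z‖ := norm_mul_le _ _
    _ ≤ C * exp (r₁ * enorm' (x - z) ^ p) * (C' * exp (-r * enorm' z ^ p)) :=
        mul_le_mul (hfb _) (hψb _) (norm_nonneg _) ((norm_nonneg _).trans (hfb _))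
    _ ≤ C * exp (r₁ * (enorm' x ^ p + enorm' z ^ p)) * (C' * exp (-r * enorm' z ^ p)) := by
        have := (norm_nonneg _).trans (hψb z)
        gcongr
    _ = C * C' * exp (r₁ * enorm' x ^ p) * exp (-(r - r₁) * enorm' z ^ p) := by
        rw [show -(r - r₁) * enorm' z ^ p = r₁ * enorm' z ^ p + -r * enorm' z ^ p by ring,
          mul_add, exp_add, exp_add]
        ring

theorem riemann_sum_tendsto_convolution_general {d : ℕ} (s C r₁ C' r₀ : ℝ)
    (hs : 0 < s) (hs' : 1 / s ≤ 1)
    (hr₁ : 0 < r₁) (hr : r₁ < r₀)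
    (f ψ : (Fin d → ℝ) → ℂ) (hf : Continuous f) (hψ : Continuous ψ)
    (hfb : ∀ x : Fin d → ℝ, ‖f x‖ ≤ C * Real.exp (r₁ * enorm' x ^ (1 / s)))
    (hψb : ∀ y : Fin d → ℝ, ‖ψ y‖ ≤ C' * Real.exp (-(2 * r₀) * enorm' y ^ (1 / s)))
    (x : Fin d → ℝ) :
    Tendsto
      (fun ε : ℝ => ∑' k : Fin d → ℤ,
        f (fun i => x i - ε * (k i : ℝ)) * ψ (fun i => ε * (k i : ℝ)) * (ε ^ d : ℝ))
      (nhdsWithin 0 (Set.Ioi 0))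
      (nhds (∫ y : Fin d → ℝ, f (fun i => x i - y i) * ψ y)) := by
  have hp : 0 < 1 / s := one_div_pos.mpr hs
  have hr₂ : 0 < 2 * r₀ - r₁ := by linarith
  have hF : Continuous fun z => f (fun i => x i - z i) * ψ z := by fun_prop
  have hdecay := norm_mul_le_of_growth_of_decay hp.le hs' hr₁.le hfb hψb x
  have hlim := tendsto_riemannSum_of_dominated hF
    ((integrable_exp_neg_mul_enorm'_rpow hr₂ hp).const_mul _)
    (eventually_of_mem (Ioc_mem_nhdsGT zero_lt_one) fun ε hε =>
      norm_comp_latticeFloor_le hr₂.le hp.le hs' hdecay hε)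
  refine hlim.congr fun ε => tsum_congr fun k => ?_
  rw [Complex.real_smul, mul_comm]

theorem riemann_sum_tendsto_convolution {d : ℕ} (s C r₁ C' r₀ : ℝ)
    (hs : 0 < s) (hs' : 1 / s ≤ 1) (hC : 0 < C) (hC' : 0 < C')
    (hr₁ : 0 < r₁) (hr : r₁ < r₀)
    (f ψ : (Fin d → ℝ) → ℂ) (hf : Continuous f) (hψ : Continuous ψ)
    (hfb : ∀ x : Fin d → ℝ, ‖f x‖ ≤ C * Real.exp (r₁ * enorm' x ^ (1 / s)))
    (hψb : ∀ y : Fin d → ℝ, ‖ψ y‖ ≤ C' * Real.exp (-(2 * r₀) * enorm' y ^ (1 / s)))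
    (x : Fin d → ℝ) :
    Tendsto
      (fun ε : ℝ => ∑' k : Fin d → ℤ,
        f (fun i => x i - ε * (k i : ℝ)) * ψ (fun i => ε * (k i : ℝ)) * (ε ^ d : ℝ))
      (nhdsWithin 0 (Set.Ioi 0))
      (nhds (∫ y : Fin d → ℝ, f (fun i => x i - y i) * ψ y)) :=
  riemann_sum_tendsto_convolution_general s C r₁ C' r₀ hs hs' hr₁ hr f ψ hf hψ hfb hψb x
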